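/- arXiv:2604.01022 — 4 statements merged into one kernel-verified Lean document; each statement's English description precedes it below -/
import Mathlib

section
/- Let m ≥ 1, let q_1,…,q_m ∈ ℂ∖{0} with q_1 = 1, and let ω be the predecessor-uniform twisting matrix with ω_{ij} = q_j for all i < j (and ω_{ii} = 1, ω_{ji} = ω_{ij}⁻¹). Then for all nonnegative integers k_1,…,k_m with k = k_1+⋯+k_m, the twisted multinomial coefficient factorizes as ⟨k; k_1,…,k_m⟩_ω = ∏_{j=1}^m [ℓ_j choose k_j]_{q_j}, where ℓ_j = k_1+⋯+k_j and [n choose r]_q denotes the Gaussian binomial. -/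
open Finset

/-- The twisted multinomial coefficient: the sum over all `(ks 0, …, ks (m-1))`-shuffles
`σ : Fin k → Fin m` (words in which letter `j` appears exactly `ks j` times) of the
product, over all inversions (pairs of positions `r < s` with `σ r > σ s`), of the
weight `ω (σ s) (σ r)`. -/
noncomputable def twistedMultinomial {m : ℕ} (ω : Fin m → Fin m → ℂ) (k : ℕ)
    (ks : Fin m → ℕ) : ℂ :=
  ∑ σ ∈ univ.filter (fun σ : Fin k → Fin m =>
      ∀ j : Fin m, (univ.filter fun r : Fin k => σ r = j).card = ks j),
    ∏ p ∈ univ.filter (fun p : Fin k × Fin k => p.1 < p.2 ∧ σ p.2 < σ p.1),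
      ω (σ p.2) (σ p.1)

/-- The Gaussian (q-deformed) binomial coefficient, defined as the sum of `q^|λ|` over
all partitions `λ = (λ_1 ≥ ⋯ ≥ λ_r ≥ 0)` with `λ_1 ≤ n - r`; it is `0` when `r > n`. -/
noncomputable def gaussBinom (q : ℂ) (n r : ℕ) : ℂ :=
  if r ≤ n then
    ∑ f ∈ univ.filter (fun f : Fin r → Fin (n - r + 1) =>
        ∀ i j : Fin r, i ≤ j → (f j : ℕ) ≤ (f i : ℕ)),
      q ^ (∑ i, (f i : ℕ))
  else 0


noncomputable def gSum (q : ℂ) (r b : ℕ) : ℂ :=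
  ∑ f ∈ univ.filter (fun f : Fin r → Fin b =>
      ∀ i j : Fin r, i ≤ j → (f j : ℕ) ≤ (f i : ℕ)),
    q ^ (∑ i, (f i : ℕ))

lemma gaussBinom_eq (q : ℂ) (n r : ℕ) (h : r ≤ n) :
    gaussBinom q n r = gSum q r (n - r + 1) := by
  simp [gaussBinom, gSum, h]

lemma gSum_zero_left (q : ℂ) (b : ℕ) : gSum q 0 b = 1 := by
  simp [gSum]

lemma gSum_zero_right (q : ℂ) (r : ℕ) : gSum q (r+1) 0 = 0 := by
  have : IsEmpty (Fin (r+1) → Fin 0) := ⟨fun f => (f 0).elim0⟩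
  simp [gSum]

lemma gaussBinom_zero (q : ℂ) (n : ℕ) : gaussBinom q n 0 = 1 := by
  rw [gaussBinom_eq q n 0 (Nat.zero_le n), gSum_zero_left]

lemma gaussBinom_self (q : ℂ) (n : ℕ) : gaussBinom q n n = 1 := by
  rw [gaussBinom_eq q n n le_rfl, Nat.sub_self]
  unfold gSum
  have h1 : (univ.filter (fun f : Fin n → Fin 1 =>
      ∀ i j : Fin n, i ≤ j → (f j : ℕ) ≤ (f i : ℕ))) = univ := by
    apply Finset.filter_true_of_mem
    intro f _ i j _
    omega
  have h2 : ∀ f : Fin n → Fin 1, (∑ i, ((f i : ℕ))) = 0 := by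
    intro f; apply Finset.sum_eq_zero; intro i _; omega
  rw [h1]
  simp [h2]

lemma gSum_succ (q : ℂ) (r b : ℕ) :
    gSum q (r+1) (b+1) = gSum q (r+1) b + q ^ b * gSum q r (b+1) := by
  rw [gSum, ← Finset.sum_filter_add_sum_filter_not _ (fun f => (f 0 : ℕ) < b)]
  congr 1
  · -- values all < b
    rw [Finset.filter_filter, gSum]
    refine Finset.sum_bij' (fun f hf => fun i => (⟨(f i : ℕ), ?_⟩ : Fin b))
      (fun g hg => fun i => (⟨(g i : ℕ), ?_⟩ : Fin (b+1))) ?_ ?_ ?_ ?_ ?_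
    · -- bound: f i < b
      rw [Finset.mem_filter] at hf
      have h1 := hf.2.1 0 i (Fin.zero_le i)
      have h2 := hf.2.2
      omega
    · -- bound: g i < b+1
      have := (g i).isLt; omega
    · intro f hf
      rw [Finset.mem_filter] at hf ⊢
      exact ⟨Finset.mem_univ _, fun i j hij => hf.2.1 i j hij⟩
    · intro g hg
      rw [Finset.mem_filter] at hg ⊢
      refine ⟨Finset.mem_univ _, fun i j hij => hg.2 i j hij, ?_⟩
      simpa using (g 0).isLt
    · intro f hf; funext i; apply Fin.ext; rfl
    · intro g hg; funext i; apply Fin.ext; rfl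
    · intro f hf; rfl
  · -- f 0 = b
    rw [Finset.filter_filter, gSum, Finset.mul_sum]
    refine Finset.sum_bij' (fun f hf => f ∘ Fin.succ)
      (fun g hg => Fin.cons (Fin.last b) g) ?_ ?_ ?_ ?_ ?_
    · intro f hf
      rw [Finset.mem_filter] at hf ⊢
      refine ⟨Finset.mem_univ _, fun i j hij => hf.2.1 i.succ j.succ (by simpa using hij)⟩
    · intro g hg
      rw [Finset.mem_filter] at hg ⊢
      refine ⟨Finset.mem_univ _, ⟨?_, by simp [Fin.last]⟩⟩
      intro i j hij
      induction i using Fin.cases with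
      | zero => simp [Fin.cons_zero]; exact Fin.is_le _
      | succ i' =>
        induction j using Fin.cases with
        | zero => exact (Fin.succ_ne_zero i' (Fin.le_zero_iff.mp hij)).elim
        | succ j' =>
          simp only [Fin.cons_succ]
          exact hg.2 i' j' (by simpa using hij)
    · intro f hf
      rw [Finset.mem_filter] at hf
      funext i
      induction i using Fin.cases with
      | zero =>
        simp only [Fin.cons_zero]
        apply Fin.ext
        have h1 := hf.2.2
        have h2 := (f 0).isLt
        simp [Fin.last]; omega
      | succ i' => simp [Fin.cons_succ]
    · intro g hg; funext i; simp [Fin.cons_succ]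
    · intro f hf
      rw [Finset.mem_filter] at hf
      rw [Fin.sum_univ_succ, pow_add]
      congr 2
      have h2 := (f 0).isLt
      omega

lemma gaussBinom_pascal (q : ℂ) (n r : ℕ) (h : r ≤ n) :
    gaussBinom q (n+1) (r+1)
      = gaussBinom q n (r+1) + q ^ (n - r) * gaussBinom q n r := by
  rw [gaussBinom_eq q (n+1) (r+1) (by omega), gaussBinom_eq q n r h,
    show (n+1) - (r+1) + 1 = (n - r) + 1 from by omega, gSum_succ]
  congr 1
  rcases lt_or_eq_of_le h with hlt | rfl
  · rw [gaussBinom_eq q n (r+1) hlt, show n - (r+1) + 1 = n - r from by omega]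
  · rw [Nat.sub_self, gSum_zero_right, gaussBinom, if_neg (by omega)]


lemma gaussBinom_neg (q : ℂ) (n r : ℕ) (h : ¬ r ≤ n) : gaussBinom q n r = 0 := by
  rw [gaussBinom, if_neg h]

lemma twistedMultinomial_nil {m : ℕ} (ω : Fin m → Fin m → ℂ) (ks : Fin m → ℕ)
    (h : ∀ j, ks j = 0) : twistedMultinomial ω 0 ks = 1 := by
  rw [twistedMultinomial]
  have h1 : (univ.filter (fun σ : Fin 0 → Fin m =>
      ∀ j : Fin m, (univ.filter fun r : Fin 0 => σ r = j).card = ks j)) = univ := by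
    apply Finset.filter_true_of_mem
    intro σ _ j
    simp [h j]
  rw [h1]
  have h2 : (univ : Finset (Fin 0 × Fin 0)) = ∅ := by simp
  simp [h2]

lemma count_cons {m k : ℕ} (j : Fin m) (τ : Fin k → Fin m) (i : Fin m) :
    (univ.filter fun r : Fin (k+1) => (Fin.cons j τ : Fin (k+1) → Fin m) r = i).card
      = (if j = i then 1 else 0) + (univ.filter fun r : Fin k => τ r = i).card := by
  rw [Finset.card_filter, Finset.card_filter, Fin.sum_univ_succ]
  simp

lemma shuffle_cons_iff {m k : ℕ} (ks : Fin m → ℕ) (j : Fin m) (τ : Fin k → Fin m) :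
    (∀ i : Fin m, (univ.filter fun r : Fin (k+1) => (Fin.cons j τ : Fin (k+1) → Fin m) r = i).card = ks i)
      ↔ 1 ≤ ks j ∧ ∀ i : Fin m, (univ.filter fun r : Fin k => τ r = i).card
          = Function.update ks j (ks j - 1) i := by
  constructor
  · intro h
    have hj := h j
    rw [count_cons, if_pos rfl] at hj
    refine ⟨by omega, fun i => ?_⟩
    by_cases hij : i = j
    · subst hij
      rw [Function.update_self]
      omega
    · rw [Function.update_of_ne hij]
      have := h i
      rw [count_cons, if_neg (fun e => hij e.symm)] at this
      omega
  · rintro ⟨h1, h2⟩ i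
    rw [count_cons]
    by_cases hij : i = j
    · subst hij
      rw [if_pos rfl, h2 i, Function.update_self]
      omega
    · rw [if_neg (fun e => hij e.symm), h2 i, Function.update_of_ne hij]
      omega

lemma card_filter_lt {m k : ℕ} (τ : Fin k → Fin m) (j : Fin m) :
    (univ.filter fun s => τ s < j).card
      = ∑ i ∈ Finset.Iio j, (univ.filter fun s => τ s = i).card := by
  rw [Finset.card_filter]
  simp_rw [Finset.card_filter]
  rw [Finset.sum_comm]
  refine Finset.sum_congr rfl fun s _ => ?_
  rw [show (∑ i ∈ Finset.Iio j, if τ s = i then 1 else 0)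
      = if τ s ∈ Finset.Iio j then 1 else 0 from Finset.sum_ite_eq _ _ _]
  simp

lemma prod_inv_cons {m k : ℕ} (ω : Fin m → Fin m → ℂ) (j : Fin m) (τ : Fin k → Fin m) :
    (∏ p ∈ univ.filter (fun p : Fin (k+1) × Fin (k+1) =>
        p.1 < p.2 ∧ (Fin.cons j τ : Fin (k+1) → Fin m) p.2 < (Fin.cons j τ : Fin (k+1) → Fin m) p.1),
        ω ((Fin.cons j τ : Fin (k+1) → Fin m) p.2) ((Fin.cons j τ : Fin (k+1) → Fin m) p.1))
      = (∏ s ∈ univ.filter (fun s : Fin k => τ s < j), ω (τ s) j)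
        * ∏ p ∈ univ.filter (fun p : Fin k × Fin k => p.1 < p.2 ∧ τ p.2 < τ p.1),
            ω (τ p.2) (τ p.1) := by
  rw [Finset.prod_filter, Finset.prod_filter, Finset.prod_filter,
    Fintype.prod_prod_type, Fintype.prod_prod_type, Fin.prod_univ_succ]
  congr 1
  · -- first position = 0
    rw [Fin.prod_univ_succ]
    simp [Fin.succ_pos]
  · -- first position = succ r
    refine Finset.prod_congr rfl fun r _ => ?_
    rw [Fin.prod_univ_succ]
    simp [Fin.succ_lt_succ_iff]

lemma twistedMultinomial_succ {m k : ℕ} (q : Fin m → ℂ) (ω : Fin m → Fin m → ℂ)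
    (hω : ∀ i j : Fin m, ω i j = if i < j then q j else if j < i then (q i)⁻¹ else 1)
    (ks : Fin m → ℕ) :
    twistedMultinomial ω (k+1) ks
      = ∑ j ∈ univ.filter (fun j : Fin m => 1 ≤ ks j),
          q j ^ (∑ i ∈ Finset.Iio j, ks i)
            * twistedMultinomial ω k (Function.update ks j (ks j - 1)) := by
  rw [twistedMultinomial, Finset.sum_filter, Finset.sum_filter,
    ← Fintype.sum_equiv ((Fin.consEquiv (fun _ => Fin m)))
      (fun p : Fin m × (Fin k → Fin m) =>
        if (∀ i : Fin m, (univ.filter fun r : Fin (k+1) =>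
            (Fin.cons p.1 p.2 : Fin (k+1) → Fin m) r = i).card = ks i) then
          ∏ pr ∈ univ.filter (fun pr : Fin (k+1) × Fin (k+1) =>
              pr.1 < pr.2 ∧ (Fin.cons p.1 p.2 : Fin (k+1) → Fin m) pr.2
                < (Fin.cons p.1 p.2 : Fin (k+1) → Fin m) pr.1),
            ω ((Fin.cons p.1 p.2 : Fin (k+1) → Fin m) pr.2)
              ((Fin.cons p.1 p.2 : Fin (k+1) → Fin m) pr.1)
        else 0) _ (fun p => rfl),
    Fintype.sum_prod_type]
  refine Finset.sum_congr rfl fun j _ => ?_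
  by_cases hj : 1 ≤ ks j
  · simp only [hj, if_true]
    rw [twistedMultinomial, Finset.sum_filter, Finset.mul_sum]
    refine Finset.sum_congr rfl fun τ _ => ?_
    by_cases hτ : ∀ i : Fin m, (univ.filter fun r : Fin k => τ r = i).card
        = Function.update ks j (ks j - 1) i
    · rw [if_pos ((shuffle_cons_iff ks j τ).mpr ⟨hj, hτ⟩), if_pos hτ, prod_inv_cons]
      congr 1
      have h1 : ∀ s ∈ univ.filter (fun s : Fin k => τ s < j), ω (τ s) j = q j := by
        intro s hs
        rw [Finset.mem_filter] at hs
        rw [hω, if_pos hs.2]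
      rw [Finset.prod_congr rfl h1, Finset.prod_const, card_filter_lt]
      congr 1
      refine Finset.sum_congr rfl fun i hi => ?_
      rw [hτ i, Function.update_of_ne (ne_of_lt (Finset.mem_Iio.mp hi))]
    · rw [if_neg (fun h => hτ ((shuffle_cons_iff ks j τ).mp h).2), if_neg hτ, mul_zero]
  · simp only [hj, if_false]
    apply Finset.sum_eq_zero
    intro τ _
    rw [if_neg]
    intro h
    exact hj ((shuffle_cons_iff ks j τ).mp h).1

lemma gauss_expand {m : ℕ} (q : Fin m → ℂ) (ks : Fin m → ℕ) (n : ℕ) (hnm : n ≤ m) :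
    ∏ i ∈ univ.filter (fun i : Fin m => (i:ℕ) < n),
        gaussBinom (q i) (∑ i' ∈ Finset.Iic i, ks i') (ks i)
      = (∑ j ∈ univ.filter (fun j : Fin m => (j:ℕ) < n ∧ 1 ≤ ks j),
          q j ^ (∑ i ∈ Finset.Iio j, ks i)
            * ((∏ i ∈ Finset.Iio j, gaussBinom (q i) (∑ i' ∈ Finset.Iic i, ks i') (ks i))
              * (gaussBinom (q j) ((∑ i' ∈ Finset.Iic j, ks i') - 1) (ks j - 1)
                * ∏ i ∈ univ.filter (fun i : Fin m => j < i ∧ (i:ℕ) < n),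
                    gaussBinom (q i) ((∑ i' ∈ Finset.Iic i, ks i') - 1) (ks i))))
        + (if ∀ i : Fin m, (i:ℕ) < n → ks i = 0 then 1 else 0) := by
  induction n with
  | zero =>
    have e0 : (univ.filter (fun i : Fin m => (i:ℕ) < 0)) = ∅ := by ext i; simp
    have e1 : (univ.filter (fun j : Fin m => (j:ℕ) < 0 ∧ 1 ≤ ks j)) = ∅ := by ext i; simp
    rw [e0, e1]
    simp
  | succ n ih =>
    have hn : n < m := hnm
    have hnm' : n ≤ m := le_of_lt hn
    set t : Fin m := ⟨n, hn⟩ with ht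
    have htv : (t:ℕ) = n := rfl
    have F1 : univ.filter (fun i : Fin m => (i:ℕ) < n+1)
        = insert t (univ.filter (fun i : Fin m => (i:ℕ) < n)) := by
      ext i
      simp only [mem_filter, mem_univ, true_and, mem_insert, Fin.ext_iff, htv]
      omega
    have hts : t ∉ univ.filter (fun i : Fin m => (i:ℕ) < n) := by simp [htv]
    have F2 : Finset.Iio t = univ.filter (fun i : Fin m => (i:ℕ) < n) := by
      ext i
      simp [Fin.lt_def, htv]
    have F3 : (∑ i' ∈ Finset.Iic t, ks i') = ks t + ∑ i' ∈ Finset.Iio t, ks i' := by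
      rw [← Finset.Iio_insert t, Finset.sum_insert (by simp)]
    have F5 : univ.filter (fun i : Fin m => t < i ∧ (i:ℕ) < n+1) = ∅ := by
      ext i
      simp only [mem_filter, mem_univ, true_and, Finset.notMem_empty, iff_false, not_and,
        Fin.lt_def, htv]
      omega
    have F4 : ∀ j : Fin m, (j:ℕ) < n → univ.filter (fun i : Fin m => j < i ∧ (i:ℕ) < n+1)
        = insert t (univ.filter (fun i : Fin m => j < i ∧ (i:ℕ) < n)) := by
      intro j hj
      ext i
      simp only [mem_filter, mem_univ, true_and, mem_insert, Fin.lt_def, Fin.ext_iff, htv]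
      omega
    have ht4 : ∀ j : Fin m, t ∉ univ.filter (fun i : Fin m => j < i ∧ (i:ℕ) < n) := by
      intro j
      simp [htv]
    have e5 := ih hnm'
    rw [← F2] at e5
    by_cases hk : 1 ≤ ks t
    · -- main case
      have hts2 : t ∉ univ.filter (fun j : Fin m => (j:ℕ) < n ∧ 1 ≤ ks j) := by simp [htv]
      have F6 : univ.filter (fun j : Fin m => (j:ℕ) < n+1 ∧ 1 ≤ ks j)
          = insert t (univ.filter (fun j : Fin m => (j:ℕ) < n ∧ 1 ≤ ks j)) := by
        ext j
        simp only [mem_filter, mem_univ, true_and, mem_insert, Fin.ext_iff, htv]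
        by_cases hj : (j:ℕ) = n
        · have hjt : j = t := Fin.ext (by simp [htv, hj])
          subst hjt
          simp [htv, hk]
        · omega
      have e1 : gaussBinom (q t) (∑ i' ∈ Finset.Iic t, ks i') (ks t)
          = gaussBinom (q t) ((∑ i' ∈ Finset.Iic t, ks i') - 1) (ks t)
            + q t ^ (∑ i ∈ Finset.Iio t, ks i)
              * gaussBinom (q t) ((∑ i' ∈ Finset.Iic t, ks i') - 1) (ks t - 1) := by
        have h1 := gaussBinom_pascal (q t) ((∑ i' ∈ Finset.Iic t, ks i') - 1) (ks t - 1)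
          (by omega)
        rw [show ((∑ i' ∈ Finset.Iic t, ks i') - 1) + 1 = ∑ i' ∈ Finset.Iic t, ks i' from by
              omega,
          show (ks t - 1) + 1 = ks t from by omega,
          show ((∑ i' ∈ Finset.Iic t, ks i') - 1) - (ks t - 1) = ∑ i ∈ Finset.Iio t, ks i from by
              omega] at h1
        exact h1
      have e4 : gaussBinom (q t) ((∑ i' ∈ Finset.Iic t, ks i') - 1) (ks t)
          * (if ∀ i : Fin m, (i:ℕ) < n → ks i = 0 then (1:ℂ) else 0) = 0 := by
        split_ifs with h
        · have hS0 : ∑ i ∈ Finset.Iio t, ks i = 0 :=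
            Finset.sum_eq_zero (fun i hi => h i (Fin.lt_def.mp (Finset.mem_Iio.mp hi)))
          rw [gaussBinom_neg _ _ _ (by omega), zero_mul]
        · rw [mul_zero]
      have e6 : (if ∀ i : Fin m, (i:ℕ) < n+1 → ks i = 0 then (1:ℂ) else 0) = 0 := by
        rw [if_neg]
        intro h
        have := h t (by omega)
        omega
      have e2 : (∑ j ∈ univ.filter (fun j : Fin m => (j:ℕ) < n ∧ 1 ≤ ks j),
            q j ^ (∑ i ∈ Finset.Iio j, ks i)
              * ((∏ i ∈ Finset.Iio j, gaussBinom (q i) (∑ i' ∈ Finset.Iic i, ks i') (ks i))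
                * (gaussBinom (q j) ((∑ i' ∈ Finset.Iic j, ks i') - 1) (ks j - 1)
                  * ∏ i ∈ univ.filter (fun i : Fin m => j < i ∧ (i:ℕ) < n+1),
                      gaussBinom (q i) ((∑ i' ∈ Finset.Iic i, ks i') - 1) (ks i))))
          = gaussBinom (q t) ((∑ i' ∈ Finset.Iic t, ks i') - 1) (ks t)
            * (∑ j ∈ univ.filter (fun j : Fin m => (j:ℕ) < n ∧ 1 ≤ ks j),
              q j ^ (∑ i ∈ Finset.Iio j, ks i)
                * ((∏ i ∈ Finset.Iio j, gaussBinom (q i) (∑ i' ∈ Finset.Iic i, ks i') (ks i))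
                  * (gaussBinom (q j) ((∑ i' ∈ Finset.Iic j, ks i') - 1) (ks j - 1)
                    * ∏ i ∈ univ.filter (fun i : Fin m => j < i ∧ (i:ℕ) < n),
                        gaussBinom (q i) ((∑ i' ∈ Finset.Iic i, ks i') - 1) (ks i)))) := by
        rw [Finset.mul_sum]
        refine Finset.sum_congr rfl fun j hj => ?_
        rw [F4 j (Finset.mem_filter.mp hj).2.1, Finset.prod_insert (ht4 j)]
        ring
      rw [F1, Finset.prod_insert hts, ih hnm', F6, Finset.sum_insert hts2, F5,
        Finset.prod_empty, mul_one, e2, e5, e1, e6]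
      linear_combination e4
    · -- ks t = 0
      have hk0 : ks t = 0 := by omega
      have F6A : univ.filter (fun j : Fin m => (j:ℕ) < n+1 ∧ 1 ≤ ks j)
          = univ.filter (fun j : Fin m => (j:ℕ) < n ∧ 1 ≤ ks j) := by
        ext j
        simp only [mem_filter, mem_univ, true_and]
        by_cases hj : (j:ℕ) = n
        · have hjt : j = t := Fin.ext (by simp [htv, hj])
          subst hjt
          simp [htv, hk0]
        · omega
      have eGt : gaussBinom (q t) (∑ i' ∈ Finset.Iic t, ks i') (ks t) = 1 := by
        rw [hk0, gaussBinom_zero]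
      have e2A : (∑ j ∈ univ.filter (fun j : Fin m => (j:ℕ) < n ∧ 1 ≤ ks j),
            q j ^ (∑ i ∈ Finset.Iio j, ks i)
              * ((∏ i ∈ Finset.Iio j, gaussBinom (q i) (∑ i' ∈ Finset.Iic i, ks i') (ks i))
                * (gaussBinom (q j) ((∑ i' ∈ Finset.Iic j, ks i') - 1) (ks j - 1)
                  * ∏ i ∈ univ.filter (fun i : Fin m => j < i ∧ (i:ℕ) < n+1),
                      gaussBinom (q i) ((∑ i' ∈ Finset.Iic i, ks i') - 1) (ks i))))
          = (∑ j ∈ univ.filter (fun j : Fin m => (j:ℕ) < n ∧ 1 ≤ ks j),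
              q j ^ (∑ i ∈ Finset.Iio j, ks i)
                * ((∏ i ∈ Finset.Iio j, gaussBinom (q i) (∑ i' ∈ Finset.Iic i, ks i') (ks i))
                  * (gaussBinom (q j) ((∑ i' ∈ Finset.Iic j, ks i') - 1) (ks j - 1)
                    * ∏ i ∈ univ.filter (fun i : Fin m => j < i ∧ (i:ℕ) < n),
                        gaussBinom (q i) ((∑ i' ∈ Finset.Iic i, ks i') - 1) (ks i)))) := by
        refine Finset.sum_congr rfl fun j hj => ?_
        rw [F4 j (Finset.mem_filter.mp hj).2.1, Finset.prod_insert (ht4 j), hk0,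
          gaussBinom_zero, one_mul]
      have e6A : (if ∀ i : Fin m, (i:ℕ) < n+1 → ks i = 0 then (1:ℂ) else 0)
          = (if ∀ i : Fin m, (i:ℕ) < n → ks i = 0 then (1:ℂ) else 0) := by
        refine if_congr ?_ rfl rfl
        constructor
        · intro h i hi
          exact h i (by omega)
        · intro h i hi
          by_cases hji : (i:ℕ) = n
          · have hjt : i = t := Fin.ext (by simp [htv, hji])
            rw [hjt]
            exact hk0
          · exact h i (by omega)
      rw [F1, Finset.prod_insert hts, ih hnm', eGt, one_mul, F6A, e2A, e6A]

lemma twistedMultinomial_aux {m : ℕ} (q : Fin m → ℂ) (ω : Fin m → Fin m → ℂ)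
    (hω : ∀ i j : Fin m, ω i j = if i < j then q j else if j < i then (q i)⁻¹ else 1) :
    ∀ k (ks : Fin m → ℕ), (∑ j, ks j) = k →
    twistedMultinomial ω k ks
      = ∏ j : Fin m, gaussBinom (q j) (∑ i ∈ Finset.Iic j, ks i) (ks j) := by
  intro k
  induction k with
  | zero =>
    intro ks hks
    have h0 : ∀ j, ks j = 0 := by
      intro j
      exact Finset.sum_eq_zero_iff.mp hks j (Finset.mem_univ j)
    rw [twistedMultinomial_nil ω ks h0]
    symm
    apply Finset.prod_eq_one
    intro j _
    have h1 : (∑ i ∈ Finset.Iic j, ks i) = 0 := Finset.sum_eq_zero fun i _ => h0 i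
    rw [h1, h0 j, gaussBinom_zero]
  | succ k ihk =>
    intro ks hks
    rw [twistedMultinomial_succ q ω hω ks]
    have hGE := gauss_expand q ks m le_rfl
    have hfilt : univ.filter (fun i : Fin m => (i:ℕ) < m) = univ :=
      Finset.filter_true_of_mem (fun i _ => i.isLt)
    rw [hfilt] at hGE
    have hind : (if ∀ i : Fin m, (i:ℕ) < m → ks i = 0 then (1:ℂ) else 0) = 0 := by
      rw [if_neg]
      intro h
      have h1 : ∑ j, ks j = 0 := Finset.sum_eq_zero fun j _ => h j j.isLt
      omega
    rw [hGE, hind, add_zero]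
    have hf2 : univ.filter (fun j : Fin m => (j:ℕ) < m ∧ 1 ≤ ks j)
        = univ.filter (fun j : Fin m => 1 ≤ ks j) := by
      ext j
      simp [j.isLt]
    rw [hf2]
    refine Finset.sum_congr rfl fun j hj => ?_
    have hj1 : 1 ≤ ks j := (Finset.mem_filter.mp hj).2
    have hstep : (∑ i, Function.update ks j (ks j - 1) i) = k := by
      have h1 := Finset.sum_erase_add univ ks (Finset.mem_univ j)
      rw [Finset.sum_update_of_mem (Finset.mem_univ j), Finset.sdiff_singleton_eq_erase]
      omega
    rw [ihk _ hstep]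
    congr 1
    have hsum_upd : ∀ (s : Finset (Fin m)), j ∈ s →
        (∑ i ∈ s, Function.update ks j (ks j - 1) i) = (∑ i ∈ s, ks i) - 1 := by
      intro s hjs
      have h1 := Finset.sum_erase_add s ks hjs
      rw [Finset.sum_update_of_mem hjs, Finset.sdiff_singleton_eq_erase]
      omega
    have hsum_no : ∀ (s : Finset (Fin m)), j ∉ s →
        (∑ i ∈ s, Function.update ks j (ks j - 1) i) = ∑ i ∈ s, ks i := by
      intro s hjs
      exact Finset.sum_congr rfl fun i hi => Function.update_of_ne (by rintro rfl; exact hjs hi) _ _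
    have hu : (univ : Finset (Fin m)) = Finset.Iio j ∪ Finset.Ici j := by
      ext i
      simp [lt_or_ge]
    have hd : Disjoint (Finset.Iio j) (Finset.Ici j) := by
      rw [Finset.disjoint_left]
      intro a ha hb
      exact absurd (Finset.mem_Ici.mp hb) (not_le.mpr (Finset.mem_Iio.mp ha))
    have hIoi : Finset.Ioi j = univ.filter (fun i : Fin m => j < i ∧ (i:ℕ) < m) := by
      ext i
      simp [i.isLt]
    conv_lhs => rw [hu, Finset.prod_union hd, ← Finset.Ioi_insert j,
      Finset.prod_insert (by simp), hIoi]
    refine congr_arg₂ _ ?_ (congr_arg₂ _ ?_ ?_)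
    · refine Finset.prod_congr rfl fun i hi => ?_
      have hij : i ≠ j := ne_of_lt (Finset.mem_Iio.mp hi)
      rw [Function.update_of_ne hij, hsum_no (Finset.Iic i)
        (fun hmem => absurd (Finset.mem_Iic.mp hmem)
          (not_le.mpr (Finset.mem_Iio.mp hi)))]
    · rw [Function.update_self, hsum_upd (Finset.Iic j) (Finset.mem_Iic.mpr le_rfl)]
    · refine Finset.prod_congr rfl fun i hi => ?_
      have hji : j < i := (Finset.mem_filter.mp hi).2.1
      rw [Function.update_of_ne (ne_of_gt hji),
        hsum_upd (Finset.Iic i) (Finset.mem_Iic.mpr (le_of_lt hji))]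


/-- Factorization of the twisted multinomial coefficient under predecessor-uniform
twisting: `⟨k; k_1,…,k_m⟩_ω = ∏_j [ℓ_j choose k_j]_{q_j}` with `ℓ_j = k_1 + ⋯ + k_j`. -/
theorem twistedMultinomial_factorization
    (m : ℕ) (hm : 1 ≤ m) (q : Fin m → ℂ) (hq : ∀ j, q j ≠ 0)
    (hq1 : q ⟨0, by omega⟩ = 1)
    (ω : Fin m → Fin m → ℂ)
    (hω : ∀ i j : Fin m, ω i j = if i < j then q j else if j < i then (q i)⁻¹ else 1)
    (ks : Fin m → ℕ) :
    twistedMultinomial ω (∑ j, ks j) ks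
      = ∏ j : Fin m, gaussBinom (q j) (∑ i ∈ Finset.Iic j, ks i) (ks j) := by
  exact twistedMultinomial_aux q ω hω (∑ j, ks j) ks rfl
end

section
/- Let A_ω be a single-order twisted algebra with generator order a ≥ 2 and generators z_1,…,z_m, let h = ∑_{j=1}^m c_j z_j with c_j ∈ ℂ, and let k ≥ 1. Then h^k = ∑_{r ∈ {0,1,…,a−1}^m} α_r · z_1^{r_1} ⋯ z_m^{r_m}, where α_r = ∑ ⟨k; k_1,…,k_m⟩_ω · ∏_{j=1}^m c_j^{k_j}, the sum running over all compositions k_1+⋯+k_m = k with k_j ≡ r_j (mod a) for every j. -/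
open Finset

/-- The defining relations of the single-order twisted algebra: `z_j ^ a = 1` and
`z_j z_i = ω_{ij} z_i z_j` for `i < j`. -/
inductive TwistRel (m a : ℕ) (ω : Fin m → Fin m → ℂ) :
    FreeAlgebra ℂ (Fin m) → FreeAlgebra ℂ (Fin m) → Prop
  | pow (j : Fin m) : TwistRel m a ω (FreeAlgebra.ι ℂ j ^ a) 1
  | comm (i j : Fin m) (hij : i < j) :
      TwistRel m a ω (FreeAlgebra.ι ℂ j * FreeAlgebra.ι ℂ i)
        (ω i j • (FreeAlgebra.ι ℂ i * FreeAlgebra.ι ℂ j))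

/-- The generator `z_j` of the single-order twisted algebra `A_ω`. -/
noncomputable def zGen (m a : ℕ) (ω : Fin m → Fin m → ℂ) (j : Fin m) :
    RingQuot (TwistRel m a ω) :=
  RingQuot.mkAlgHom ℂ (TwistRel m a ω) (FreeAlgebra.ι ℂ j)

namespace TwistedAux

variable {m a : ℕ} {ω : Fin m → Fin m → ℂ}

/-- The ordered monomial `z_1^{k_1} ⋯ z_m^{k_m}`. -/
noncomputable def Q (m a : ℕ) (ω : Fin m → Fin m → ℂ) (ks : Fin m → ℕ) :
    RingQuot (TwistRel m a ω) :=
  ((List.finRange m).map fun j => zGen m a ω j ^ ks j).prod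

/-- The inversion weight of a word. -/
noncomputable def W {m : ℕ} (ω : Fin m → Fin m → ℂ) {k : ℕ} (σ : Fin k → Fin m) : ℂ :=
  ∏ r : Fin k, ∏ s : Fin k, if r < s ∧ σ s < σ r then ω (σ s) (σ r) else 1

/-- Letter counts of a word. -/
def cnt {m k : ℕ} (σ : Fin k → Fin m) (j : Fin m) : ℕ :=
  (univ.filter fun r : Fin k => σ r = j).card

lemma z_pow_a (j : Fin m) : zGen m a ω j ^ a = 1 := by
  have h := RingQuot.mkAlgHom_rel ℂ (TwistRel.pow (m := m) (a := a) (ω := ω) j)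
  simpa [zGen, map_pow, map_one] using h

lemma z_pow_mod (j : Fin m) (n : ℕ) : zGen m a ω j ^ n = zGen m a ω j ^ (n % a) := by
  conv_lhs => rw [← Nat.div_add_mod n a]
  rw [pow_add, pow_mul, z_pow_a, one_pow, one_mul]

lemma z_comm_lt {i j : Fin m} (hij : i < j) :
    zGen m a ω j * zGen m a ω i = ω i j • (zGen m a ω i * zGen m a ω j) := by
  have h := RingQuot.mkAlgHom_rel ℂ (TwistRel.comm (m := m) (a := a) (ω := ω) i j hij)
  simpa [zGen, map_mul, map_smul] using h

lemma z_comm (hne : ∀ i j, ω i j ≠ 0) (hdiag : ∀ i, ω i i = 1)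
    (hinv : ∀ i j : Fin m, i < j → ω j i = (ω i j)⁻¹) (i j : Fin m) :
    zGen m a ω j * zGen m a ω i = ω i j • (zGen m a ω i * zGen m a ω j) := by
  rcases lt_trichotomy i j with h | h | h
  · exact z_comm_lt h
  · subst h; simp [hdiag]
  · rw [z_comm_lt h, smul_smul, hinv j i h, inv_mul_cancel₀ (hne j i), one_smul]

variable (hcomm : ∀ i j : Fin m,
    zGen m a ω j * zGen m a ω i = ω i j • (zGen m a ω i * zGen m a ω j))

include hcomm in
lemma z_pow_comm (i j : Fin m) (n : ℕ) :
    zGen m a ω j * zGen m a ω i ^ n = (ω i j) ^ n • (zGen m a ω i ^ n * zGen m a ω j) := by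
  induction n with
  | zero => simp
  | succ n ih =>
    rw [pow_succ, ← mul_assoc, ih, smul_mul_assoc, mul_assoc, hcomm i j, mul_smul_comm,
      smul_smul, ← pow_succ, ← mul_assoc, ← pow_succ]

include hcomm in
lemma z_insert (j : Fin m) (ks : Fin m → ℕ) :
    ∀ l : List (Fin m), l.Pairwise (· < ·) → j ∈ l →
      zGen m a ω j * (l.map fun i => zGen m a ω i ^ ks i).prod
        = (l.map fun i => if i < j then ω i j ^ ks i else 1).prod •
          (l.map fun i => zGen m a ω i ^ (Function.update ks j (ks j + 1)) i).prod
  | [], _, hj => by simp at hj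
  | i :: t, hp, hj => by
    rcases List.pairwise_cons.mp hp with ⟨hlt, hp'⟩
    by_cases hij : i = j
    · subst hij
      simp only [List.map_cons, List.prod_cons, if_neg (lt_irrefl i)]
      rw [← mul_assoc, ← pow_succ']
      have h1 : (t.map fun x => if x < i then ω x i ^ ks x else 1).prod = 1 := by
        apply List.prod_eq_one
        intro x hx
        rcases List.mem_map.mp hx with ⟨y, hy, rfl⟩
        rw [if_neg (asymm (hlt y hy))]
      have h2 : (t.map fun x => zGen m a ω x ^ (Function.update ks i (ks i + 1)) x)
          = t.map fun x => zGen m a ω x ^ ks x := by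
        apply List.map_congr_left
        intro x hx
        rw [Function.update_of_ne (hlt x hx).ne']
      rw [h1, one_mul, one_smul, h2, Function.update_self]
    · have hjt : j ∈ t := by
        rcases List.mem_cons.mp hj with h | h
        · exact absurd h.symm hij
        · exact h
      have hiltj : i < j := hlt j hjt
      simp only [List.map_cons, List.prod_cons, if_pos hiltj]
      rw [← mul_assoc, z_pow_comm hcomm, smul_mul_assoc, mul_assoc,
        z_insert j ks t hp' hjt, mul_smul_comm, smul_smul,
        Function.update_of_ne hij]

include hcomm in
lemma z_mul_Q (j : Fin m) (ks : Fin m → ℕ) :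
    zGen m a ω j * Q m a ω ks
      = (∏ i, if i < j then ω i j ^ ks i else 1) •
        Q m a ω (Function.update ks j (ks j + 1)) := by
  rw [Q, Q, z_insert hcomm j ks _ (List.pairwise_lt_finRange m) (List.mem_finRange j),
    Fin.prod_univ_def]

lemma W_eq_filter {k : ℕ} (σ : Fin k → Fin m) :
    (∏ p ∈ univ.filter (fun p : Fin k × Fin k => p.1 < p.2 ∧ σ p.2 < σ p.1),
      ω (σ p.2) (σ p.1)) = W ω σ := by
  rw [prod_filter, Fintype.prod_prod_type]
  rfl

lemma prod_comp_cnt {M : Type*} [CommMonoid M] {k : ℕ} (σ : Fin k → Fin m) (g : Fin m → M) :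
    ∏ t, g (σ t) = ∏ i, g i ^ cnt σ i := by
  rw [← Finset.prod_fiberwise univ σ (fun t => g (σ t))]
  refine Finset.prod_congr rfl fun i _ => ?_
  rw [Finset.prod_congr rfl (g := fun _ => g i) (fun t ht => by
    rw [(Finset.mem_filter.mp ht).2]), Finset.prod_const, cnt]

lemma cnt_succ {k : ℕ} (σ : Fin (k + 1) → Fin m) :
    cnt σ = Function.update (cnt (fun i => σ i.succ)) (σ 0)
      (cnt (fun i => σ i.succ) (σ 0) + 1) := by
  funext j
  have hh : ∀ j' : Fin m, (∑ i : Fin k, if σ i.succ = j' then 1 else 0)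
      = cnt (fun i => σ i.succ) j' := fun j' => by
    rw [cnt, Finset.card_filter]
  rw [cnt, Finset.card_filter, Fin.sum_univ_succ, hh]
  by_cases h : j = σ 0
  · subst h
    rw [Function.update_self, if_pos rfl, add_comm]
  · rw [Function.update_of_ne h, if_neg (fun hh' => h hh'.symm), zero_add]

lemma W_succ {k : ℕ} (σ : Fin (k + 1) → Fin m) :
    W ω σ = (∏ i : Fin m, if i < σ 0 then ω i (σ 0) ^ cnt (fun i => σ i.succ) i else 1)
      * W ω (fun i => σ i.succ) := by
  rw [W, Fin.prod_univ_succ]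
  congr 1
  · rw [Fin.prod_univ_succ, if_neg (by simp), one_mul]
    rw [show (∏ t : Fin k, if (0 : Fin (k+1)) < t.succ ∧ σ t.succ < σ 0
        then ω (σ t.succ) (σ 0) else 1)
      = ∏ t : Fin k, if σ t.succ < σ 0 then ω (σ t.succ) (σ 0) else 1 from
      Finset.prod_congr rfl fun t _ => by simp [Fin.succ_pos]]
    rw [show (∏ t : Fin k, if σ t.succ < σ 0 then ω (σ t.succ) (σ 0) else 1)
      = ∏ i, (if i < σ 0 then ω i (σ 0) else 1) ^ cnt (fun i => σ i.succ) i from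
      prod_comp_cnt (fun i => σ i.succ) (fun i => if i < σ 0 then ω i (σ 0) else 1)]
    refine Finset.prod_congr rfl fun i _ => ?_
    rw [apply_ite (· ^ cnt (fun i => σ i.succ) i), one_pow]
  · refine Finset.prod_congr rfl fun r _ => ?_
    rw [Fin.prod_univ_succ, if_neg (by simp [Fin.not_lt_zero]), one_mul]
    refine Finset.prod_congr rfl fun s _ => ?_
    simp only [Fin.succ_lt_succ_iff]

include hcomm in
lemma normal_form : ∀ (k : ℕ) (σ : Fin k → Fin m),
    ((List.ofFn σ).map (zGen m a ω)).prod = W ω σ • Q m a ω (cnt σ)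
  | 0, σ => by
    have h : ∀ j, cnt σ j = 0 := fun j => by simp [cnt]
    simp only [List.ofFn_zero, List.map_nil, List.prod_nil, W, Q]
    rw [Finset.prod_congr rfl (g := fun _ => (1 : ℂ)) (fun i _ => by
      exact Finset.prod_of_isEmpty _), Finset.prod_const_one, one_smul]
    symm
    apply List.prod_eq_one
    intro x hx
    rcases List.mem_map.mp hx with ⟨y, hy, rfl⟩
    rw [h, pow_zero]
  | (k + 1), σ => by
    rw [List.ofFn_succ, List.map_cons, List.prod_cons,
      normal_form k (fun i => σ i.succ), mul_smul_comm, z_mul_Q hcomm,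
      smul_smul, W_succ, cnt_succ, mul_comm (W ω fun i => σ i.succ)]

lemma Q_mod (ks : Fin m → ℕ) : Q m a ω ks = Q m a ω (fun j => ks j % a) := by
  unfold Q
  congr 1
  apply List.map_congr_left
  intro j _
  exact z_pow_mod j (ks j)

lemma expand (c : Fin m → ℂ) : ∀ k : ℕ,
    (∑ j, c j • zGen m a ω j) ^ k
      = ∑ σ : Fin k → Fin m, (∏ i, c (σ i)) • ((List.ofFn σ).map (zGen m a ω)).prod
  | 0 => by
    rw [pow_zero, Fintype.sum_unique]
    simp
  | (k + 1) => by
    rw [pow_succ', expand c k, Finset.mul_sum]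
    rw [← Equiv.sum_comp (Fin.consEquiv (fun _ : Fin (k + 1) => Fin m))]
    rw [Fintype.sum_prod_type]
    rw [Finset.sum_comm]
    refine Finset.sum_congr rfl fun σ _ => ?_
    rw [Finset.sum_mul]
    refine Finset.sum_congr rfl fun j _ => ?_
    rw [smul_mul_smul_comm]
    congr 1
    · rw [Fin.prod_univ_succ]
      simp [Fin.consEquiv]
    · rw [List.ofFn_succ]
      simp [Fin.consEquiv]

end TwistedAux

open TwistedAux in
/-- In the single-order twisted algebra, `h^k = ∑_{r ∈ {0,…,a-1}^m} α_r z_1^{r_1}⋯z_m^{r_m}`,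
where `α_r` is the sum of `⟨k; k_1,…,k_m⟩_ω ∏_j c_j^{k_j}` over compositions
`k_1+⋯+k_m = k` with `k_j ≡ r_j (mod a)`. -/
theorem twisted_power_reduced_expansion
    (m a : ℕ) (hm : 1 ≤ m) (ha : 2 ≤ a)
    (ω : Fin m → Fin m → ℂ) (hne : ∀ i j, ω i j ≠ 0)
    (hdiag : ∀ i, ω i i = 1)
    (hinv : ∀ i j : Fin m, i < j → ω j i = (ω i j)⁻¹)
    (hroot : ∀ i j, ω i j ^ a = 1)
    (c : Fin m → ℂ) (k : ℕ) (hk : 1 ≤ k) :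
    (∑ j, c j • zGen m a ω j) ^ k
      = ∑ r : Fin m → Fin a,
          (∑ ks ∈ (Finset.Nat.antidiagonalTuple m k).filter
              (fun ks => ∀ j, ks j % a = (r j : ℕ)),
            twistedMultinomial ω k ks * ∏ j, c j ^ ks j) •
          ((List.finRange m).map (fun j => zGen m a ω j ^ (r j : ℕ))).prod := by
  have ha0 : 0 < a := by omega
  have hcomm := z_comm (a := a) hne hdiag hinv
  set g : (Fin k → Fin m) → (Fin m → Fin a) :=
    fun σ j => ⟨cnt σ j % a, Nat.mod_lt _ ha0⟩ with hg
  set F : (Fin k → Fin m) → RingQuot (TwistRel m a ω) :=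
    fun σ => ((∏ j, c j ^ cnt σ j) * W ω σ) • Q m a ω (fun j => cnt σ j % a) with hF
  have step1 : (∑ j, c j • zGen m a ω j) ^ k = ∑ σ : Fin k → Fin m, F σ := by
    rw [expand c k]
    refine Finset.sum_congr rfl fun σ _ => ?_
    rw [normal_form hcomm k σ, Q_mod, smul_smul, prod_comp_cnt]
  rw [step1, ← Finset.sum_fiberwise univ g F]
  refine Finset.sum_congr rfl fun r _ => ?_
  have hmap : ∀ σ ∈ univ.filter (fun σ => g σ = r),
      cnt σ ∈ (Finset.Nat.antidiagonalTuple m k).filter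
        (fun ks => ∀ j, ks j % a = (r j : ℕ)) := by
    intro σ hσ
    rw [Finset.mem_filter] at hσ ⊢
    constructor
    · rw [Finset.Nat.mem_antidiagonalTuple]
      have := Finset.card_eq_sum_card_fiberwise
        (f := σ) (s := univ) (t := univ) (fun x _ => Finset.mem_univ _)
      simpa [cnt, Fintype.card_fin] using this.symm
    · intro j
      have := congrFun hσ.2 j
      simpa [hg] using congrArg Fin.val this
  rw [← Finset.sum_fiberwise_of_maps_to hmap F]
  rw [Finset.sum_smul]
  refine Finset.sum_congr rfl fun ks hks => ?_
  rw [Finset.mem_filter] at hks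
  have hfib : (univ.filter (fun σ => g σ = r)).filter (fun σ => cnt σ = ks)
      = univ.filter (fun σ : Fin k → Fin m =>
          ∀ j : Fin m, (univ.filter fun t : Fin k => σ t = j).card = ks j) := by
    rw [Finset.filter_filter]
    apply Finset.filter_congr
    intro σ _
    constructor
    · rintro ⟨-, h2⟩ j
      exact congrFun h2 j
    · intro h
      have hc : cnt σ = ks := funext h
      refine ⟨?_, hc⟩
      funext j
      apply Fin.ext
      simp only [hg]
      rw [hc, hks.2 j]
  have hQ : ∀ σ ∈ (univ.filter (fun σ => g σ = r)).filter (fun σ => cnt σ = ks),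
      F σ = ((∏ j, c j ^ ks j) * W ω σ) •
        ((List.finRange m).map (fun j => zGen m a ω j ^ (r j : ℕ))).prod := by
    intro σ hσ
    rw [Finset.mem_filter] at hσ
    have hc : cnt σ = ks := hσ.2
    have : (fun j => cnt σ j % a) = fun j => (r j : ℕ) := by
      funext j
      rw [hc, hks.2 j]
    rw [hF]
    simp only [hc]
    rw [show (fun j => ks j % a) = fun j => ((r j : ℕ)) from funext fun j => hks.2 j]
    rfl
  rw [Finset.sum_congr rfl hQ, ← Finset.sum_smul]
  congr 1
  rw [← Finset.mul_sum, mul_comm, twistedMultinomial]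
  congr 1
  exact Finset.sum_congr hfib fun σ _ => (W_eq_filter σ).symm
end

section
/- Let k ≥ 1 be an integer and c_1,…,c_m ∈ ℂ. For each j ∈ {1,…,m} and r_j ∈ {0,1}, define the matrix A^{[j]}_{r_j} ∈ ℂ^{(k+1)×(k+1)} (rows and columns indexed by 0,…,k) by (A^{[j]}_{r_j})_{ℓ',ℓ} = c_j^{ℓ−ℓ'} / (ℓ−ℓ')! if ℓ ≥ ℓ' and ℓ − ℓ' ≡ r_j (mod 2), and 0 otherwise. Then for every r ∈ {0,1}^m, k! times the (0,k) entry of the ordered product A^{[1]}_{r_1} ⋯ A^{[m]}_{r_m} equals α_r := ∑ (k! / (k_1! ⋯ k_m!)) ∏_{j=1}^m c_j^{k_j}, the sum running over all compositions k_1+⋯+k_m = k with k_j ≡ r_j (mod 2); these α_r are the coefficients in the expansion h^k = ∑_{r ∈ {0,1}^m} α_r z_1^{r_1} ⋯ z_m^{r_m} in the commutative algebra ℂ[z_1,…,z_m]/(z_j² − 1) with h = ∑_j c_j z_j. -/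
set_option synthInstance.maxHeartbeats 400000
set_option maxHeartbeats 1000000

open Finset

/-- The generator `z_j` of the commutative algebra `ℂ[z_1,…,z_m]/(z_j² − 1)`. -/
noncomputable def commGen (m : ℕ) (j : Fin m) :
    MvPolynomial (Fin m) ℂ ⧸
      Ideal.span (Set.range fun i : Fin m => (MvPolynomial.X i ^ 2 - 1 : MvPolynomial (Fin m) ℂ)) :=
  Ideal.Quotient.mk _ (MvPolynomial.X j)

/-- The commutative MPS site matrix `A^{[j]}_{r_j}` of bond dimension `k+1`:
`(A)_{ℓ',ℓ} = c^{ℓ-ℓ'}/(ℓ-ℓ')!` if `ℓ ≥ ℓ'` and `ℓ-ℓ' ≡ r_j (mod 2)`, else `0`. -/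
noncomputable def commSiteMatrix (k : ℕ) (c : ℂ) (rj : Fin 2) :
    Matrix (Fin (k + 1)) (Fin (k + 1)) ℂ :=
  Matrix.of fun ℓ' ℓ =>
    if (ℓ' : ℕ) ≤ (ℓ : ℕ) ∧ ((ℓ : ℕ) - (ℓ' : ℕ)) % 2 = (rj : ℕ) then
      c ^ ((ℓ : ℕ) - (ℓ' : ℕ)) / (((ℓ : ℕ) - (ℓ' : ℕ)).factorial : ℂ)
    else 0

/-- The "transfer sum" `∑_{k_1+⋯+k_m = n, k_j ≡ r_j (2)} ∏_j c_j^{k_j}/k_j!`. -/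
noncomputable def Tsum (m : ℕ) (c : Fin m → ℂ) (r : Fin m → Fin 2) (n : ℕ) : ℂ :=
  ∑ ks ∈ (Finset.Nat.antidiagonalTuple m n).filter (fun ks => ∀ j, ks j % 2 = (r j : ℕ)),
    ∏ j, c j ^ ks j / ((ks j).factorial : ℂ)

lemma Tsum_zero (c : Fin 0 → ℂ) (r : Fin 0 → Fin 2) (n : ℕ) :
    Tsum 0 c r n = if n = 0 then 1 else 0 := by
  unfold Tsum
  cases n with
  | zero => simp [Finset.Nat.antidiagonalTuple_zero_zero]
  | succ n => simp [Finset.Nat.antidiagonalTuple_zero_succ]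

lemma Tsum_succ (m : ℕ) (c : Fin (m+1) → ℂ) (r : Fin (m+1) → Fin 2) (n : ℕ) :
    Tsum (m+1) c r n = ∑ i ∈ Finset.range (n+1),
      (if i % 2 = (r 0 : ℕ) then c 0 ^ i / (i.factorial : ℂ) else 0) *
        Tsum m (c ∘ Fin.succ) (r ∘ Fin.succ) (n - i) := by
  simp_rw [ite_mul, zero_mul, ← Finset.sum_filter]
  unfold Tsum
  simp_rw [Finset.mul_sum]
  rw [Finset.sum_sigma']
  refine Finset.sum_bij' (fun ks _ => (⟨ks 0, Fin.tail ks⟩ : (_ : ℕ) × (Fin m → ℕ)))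
    (fun x _ => Fin.cons x.1 x.2) ?_ ?_ ?_ ?_ ?_
  · intro ks hks
    simp only [Finset.mem_filter, Finset.Nat.mem_antidiagonalTuple] at hks
    obtain ⟨hsum, hpar⟩ := hks
    have hsum' := hsum
    rw [Fin.sum_univ_succ] at hsum'
    simp only [Finset.mem_sigma, Finset.mem_filter, Finset.mem_range,
      Finset.Nat.mem_antidiagonalTuple]
    refine ⟨⟨by omega, hpar 0⟩, by simp only [Fin.tail]; omega, fun j => hpar j.succ⟩
  · rintro ⟨i, ks⟩ hx
    simp only [Finset.mem_sigma, Finset.mem_filter, Finset.mem_range,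
      Finset.Nat.mem_antidiagonalTuple] at hx
    obtain ⟨⟨hi, hpar⟩, hsum, hpar'⟩ := hx
    simp only [Finset.mem_filter, Finset.Nat.mem_antidiagonalTuple]
    constructor
    · rw [Fin.sum_cons, hsum]; omega
    · intro j
      refine Fin.cases ?_ ?_ j
      · simpa using hpar
      · intro j'; simpa using hpar' j'
  · intro ks hks
    exact Fin.cons_self_tail ks
  · rintro ⟨i, ks⟩ hx
    simp [Fin.cons_zero, Fin.tail_cons]
  · intro ks hks
    simp only
    rw [Fin.prod_univ_succ]
    simp [Fin.cons_zero, Fin.cons_succ, Function.comp, Fin.tail,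
      Fin.cons_self_tail]

/-- The entry formula for the ordered product of site matrices. -/
lemma matProd_apply (k : ℕ) : ∀ (m : ℕ) (c : Fin m → ℂ) (r : Fin m → Fin 2)
    (ℓ' ℓ : Fin (k+1)),
    (((List.finRange m).map fun j => commSiteMatrix k (c j) (r j)).prod) ℓ' ℓ =
      if (ℓ' : ℕ) ≤ (ℓ : ℕ) then Tsum m c r ((ℓ : ℕ) - (ℓ' : ℕ)) else 0 := by
  intro m
  induction m with
  | zero =>
    intro c r ℓ' ℓ
    simp only [List.finRange_zero, List.map_nil, List.prod_nil, Matrix.one_apply,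
      Tsum_zero]
    by_cases h : ℓ' = ℓ
    · subst h; simp
    · rw [if_neg h]
      have : ¬((ℓ' : ℕ) ≤ ℓ ∧ (ℓ : ℕ) - ℓ' = 0) := by
        intro ⟨h1, h2⟩
        exact h (Fin.ext (by omega))
      by_cases h1 : (ℓ' : ℕ) ≤ ℓ
      · rw [if_pos h1, if_neg (by omega)]
      · rw [if_neg h1]
  | succ m ih =>
    intro c r ℓ' ℓ
    rw [List.finRange_succ, List.map_cons, List.map_map, List.prod_cons]
    have hcomp : ((fun j => commSiteMatrix k (c j) (r j)) ∘ Fin.succ)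
        = fun j => commSiteMatrix k ((c ∘ Fin.succ) j) ((r ∘ Fin.succ) j) := rfl
    rw [Matrix.mul_apply]
    simp_rw [hcomp, ih (c ∘ Fin.succ) (r ∘ Fin.succ)]
    by_cases hle : (ℓ' : ℕ) ≤ (ℓ : ℕ)
    · rw [if_pos hle, Tsum_succ]
      rw [← Finset.sum_subset
        (Finset.filter_subset (fun ℓ'' : Fin (k+1) => (ℓ' : ℕ) ≤ ℓ'' ∧ (ℓ'' : ℕ) ≤ ℓ) univ)
        (by
          intro ℓ'' _ h''
          simp only [Finset.mem_filter, Finset.mem_univ, true_and, not_and, not_le] at h''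
          by_cases h1 : (ℓ' : ℕ) ≤ ℓ''
          · rw [if_neg (by omega), mul_zero]
          · rw [commSiteMatrix]
            simp only [Matrix.of_apply]
            rw [if_neg (by omega), zero_mul])]
      refine Finset.sum_nbij' (fun ℓ'' => (ℓ'' : ℕ) - (ℓ' : ℕ))
        (fun i => (⟨min ((ℓ' : ℕ) + i) k, by omega⟩ : Fin (k+1))) ?_ ?_ ?_ ?_ ?_
      · intro ℓ'' h''
        simp only [Finset.mem_filter, Finset.mem_univ, true_and] at h''
        simp only [Finset.mem_range]
        omega
      · intro i hi
        simp only [Finset.mem_range] at hi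
        simp only [Finset.mem_filter, Finset.mem_univ, true_and]
        have := ℓ.is_le
        constructor <;> omega
      · intro ℓ'' h''
        simp only [Finset.mem_filter, Finset.mem_univ, true_and] at h''
        have := ℓ''.is_le
        apply Fin.ext
        simp only [Fin.val_mk]
        omega
      · intro i hi
        simp only [Finset.mem_range] at hi
        have := ℓ.is_le
        simp only [Fin.val_mk]
        omega
      · intro ℓ'' h''
        simp only [Finset.mem_filter, Finset.mem_univ, true_and] at h''
        obtain ⟨h1, h2⟩ := h''
        rw [commSiteMatrix]
        simp only [Matrix.of_apply]
        rw [if_pos h2]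
        have : (ℓ : ℕ) - (ℓ'' : ℕ) = ((ℓ : ℕ) - ℓ') - ((ℓ'' : ℕ) - ℓ') := by omega
        rw [this]
        by_cases hp : ((ℓ'' : ℕ) - ℓ') % 2 = (r 0 : ℕ)
        · rw [if_pos ⟨h1, hp⟩, if_pos hp]
        · rw [if_neg (by tauto), if_neg hp, zero_mul]
    · rw [if_neg hle]
      apply Finset.sum_eq_zero
      intro ℓ'' _
      by_cases h1 : (ℓ'' : ℕ) ≤ ℓ
      · rw [commSiteMatrix]
        simp only [Matrix.of_apply]
        rw [if_neg (by omega), zero_mul]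
      · rw [if_neg h1, mul_zero]

lemma factorial_mul_Tsum (m k : ℕ) (c : Fin m → ℂ) (r : Fin m → Fin 2) :
    (k.factorial : ℂ) * Tsum m c r k
      = ∑ ks ∈ (Finset.Nat.antidiagonalTuple m k).filter
            (fun ks => ∀ j, ks j % 2 = (r j : ℕ)),
          (Nat.multinomial Finset.univ ks : ℂ) * ∏ j, c j ^ ks j := by
  unfold Tsum
  rw [Finset.mul_sum]
  refine Finset.sum_congr rfl fun ks hks => ?_
  simp only [Finset.mem_filter, Finset.Nat.mem_antidiagonalTuple] at hks
  rw [Finset.prod_div_distrib]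
  have hF : (∏ j, ((ks j).factorial : ℂ)) ≠ 0 :=
    Finset.prod_ne_zero_iff.mpr fun j _ => Nat.cast_ne_zero.mpr (Nat.factorial_ne_zero _)
  have hspec : (∏ j, ((ks j).factorial : ℂ)) * (Nat.multinomial Finset.univ ks : ℂ)
      = (k.factorial : ℂ) := by
    rw [← Nat.cast_prod, ← Nat.cast_mul, Nat.multinomial_spec, hks.1]
  rw [mul_div_assoc', div_eq_iff hF]
  linear_combination (-(∏ j, c j ^ ks j)) * hspec

lemma prod_smul_aux {ι α Q : Type*} [CommMonoid α] [CommMonoid Q] [MulAction α Q]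
    [IsScalarTower α Q Q] [SMulCommClass α Q Q] (s : Finset ι)
    (a : ι → α) (b : ι → Q) :
    ∏ i ∈ s, a i • b i = (∏ i ∈ s, a i) • ∏ i ∈ s, b i := by
  induction s using Finset.cons_induction with
  | empty => simp
  | cons j s hj ih => rw [Finset.prod_cons, ih, smul_mul_smul_comm,
      ← Finset.prod_cons hj, ← Finset.prod_cons hj]

lemma commGen_sq (m : ℕ) (j : Fin m) : commGen m j ^ 2 = 1 := by
  unfold commGen
  rw [← map_pow]
  have h0 : Ideal.Quotient.mk
      (Ideal.span (Set.range fun i : Fin m =>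
        (MvPolynomial.X i ^ 2 - 1 : MvPolynomial (Fin m) ℂ)))
      (MvPolynomial.X j ^ 2 - 1) = 0 :=
    Ideal.Quotient.eq_zero_iff_mem.mpr (Ideal.subset_span ⟨j, rfl⟩)
  rw [RingHom.map_sub, sub_eq_zero] at h0
  rw [h0, RingHom.map_one]

lemma commGen_pow_mod (m : ℕ) (j : Fin m) (n : ℕ) :
    commGen m j ^ n = commGen m j ^ (n % 2) := by
  conv_lhs => rw [← Nat.div_add_mod n 2]
  rw [pow_add, pow_mul, commGen_sq, one_pow, one_mul]

/-- Commutative MPS: `k!` times the `(0,k)` entry of the ordered product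
`A^{[1]}_{r_1} ⋯ A^{[m]}_{r_m}` equals
`α_r = ∑ (k!/(k_1!⋯k_m!)) ∏_j c_j^{k_j}` over compositions `k_1+⋯+k_m = k`
with `k_j ≡ r_j (mod 2)`; moreover these `α_r` are the coefficients of `h^k`
in the basis `z_1^{r_1}⋯z_m^{r_m}` of `ℂ[z_1,…,z_m]/(z_j² − 1)`. -/
theorem commutative_mps (m k : ℕ) (hk : 1 ≤ k) (c : Fin m → ℂ) :
    (∀ r : Fin m → Fin 2,
      (k.factorial : ℂ) *
          (((List.finRange m).map (fun j => commSiteMatrix k (c j) (r j))).prod 0 (Fin.last k))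
        = ∑ ks ∈ (Finset.Nat.antidiagonalTuple m k).filter
              (fun ks => ∀ j, ks j % 2 = (r j : ℕ)),
            (Nat.multinomial Finset.univ ks : ℂ) * ∏ j, c j ^ ks j)
    ∧
    ((∑ j, c j • commGen m j) ^ k
      = ∑ r : Fin m → Fin 2,
          (∑ ks ∈ (Finset.Nat.antidiagonalTuple m k).filter
              (fun ks => ∀ j, ks j % 2 = (r j : ℕ)),
            (Nat.multinomial Finset.univ ks : ℂ) * ∏ j, c j ^ ks j) •
          ∏ j, commGen m j ^ (r j : ℕ)) := by
  constructor
  · intro r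
    rw [matProd_apply k m c r 0 (Fin.last k)]
    rw [if_pos (by simp), Fin.val_last, Fin.val_zero, Nat.sub_zero]
    exact factorial_mul_Tsum m k c r
  · have hanti : Finset.piAntidiag (univ : Finset (Fin m)) k
        = Finset.Nat.antidiagonalTuple m k := by
      ext ks
      simp [Finset.mem_piAntidiag, Finset.Nat.mem_antidiagonalTuple]
    have key : (∑ j, c j • commGen m j) ^ k
        = ∑ ks ∈ Finset.Nat.antidiagonalTuple m k,
            ((Nat.multinomial Finset.univ ks : ℂ) * ∏ j, c j ^ ks j) •
              ∏ j, commGen m j ^ (ks j % 2) := by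
      rw [Finset.sum_pow_eq_sum_piAntidiag, hanti]
      refine Finset.sum_congr rfl fun ks _ => ?_
      simp_rw [smul_pow]
      rw [prod_smul_aux, ← nsmul_eq_mul, ← Nat.cast_smul_eq_nsmul ℂ, smul_smul]
      congr 1
      refine Finset.prod_congr rfl fun j _ => ?_
      rw [commGen_pow_mod]
    rw [key]
    rw [← Finset.sum_fiberwise (Finset.Nat.antidiagonalTuple m k)
      (fun ks => (fun j => (⟨ks j % 2, Nat.mod_lt _ two_pos⟩ : Fin 2)))
      (fun ks => ((Nat.multinomial Finset.univ ks : ℂ) * ∏ j, c j ^ ks j) •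
        ∏ j, commGen m j ^ (ks j % 2))]
    refine Finset.sum_congr rfl fun r _ => ?_
    have hfil : (Finset.Nat.antidiagonalTuple m k).filter
          (fun ks => (fun j => (⟨ks j % 2, Nat.mod_lt _ two_pos⟩ : Fin 2)) = r)
        = (Finset.Nat.antidiagonalTuple m k).filter
          (fun ks => ∀ j, ks j % 2 = (r j : ℕ)) := by
      ext ks
      simp [funext_iff, Fin.ext_iff]
    rw [hfil, Finset.sum_smul]
    refine Finset.sum_congr rfl fun ks hks => ?_
    simp only [Finset.mem_filter] at hks
    congr 1
    exact Finset.prod_congr rfl fun j _ => by rw [hks.2 j]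
end

section
/- Let a ≥ 2 be an integer and ω : {1,…,m}² → ℂ∖{0} a twisting matrix with ω_{ij}^a = 1 for all i, j. Then the single-order twisted algebra A_ω = ℂ⟨z_1,…,z_m⟩/(z_j^a − 1, z_j z_i − ω_{ij} z_i z_j) has the a^m ordered monomials z_1^{r_1} z_2^{r_2} ⋯ z_m^{r_m}, r ∈ {0,1,…,a−1}^m, as a basis over ℂ; in particular, A_ω is a ℂ-vector space of dimension a^m. -/
open Finset

namespace TwistAux

variable {m a : ℕ} (ω : Fin m → Fin m → ℂ)

lemma z_pow_a (j : Fin m) : zGen m a ω j ^ a = 1 := by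
  have := RingQuot.mkAlgHom_rel ℂ (TwistRel.pow (m := m) (a := a) (ω := ω) j)
  simpa [zGen, map_pow, map_one] using this

lemma z_comm {i j : Fin m} (hij : i < j) :
    zGen m a ω j * zGen m a ω i = ω i j • (zGen m a ω i * zGen m a ω j) := by
  have := RingQuot.mkAlgHom_rel ℂ (TwistRel.comm (m := m) (a := a) (ω := ω) i j hij)
  simpa [zGen, map_mul, map_smul] using this

lemma z_comm_pow {i j : Fin m} (hij : i < j) (n : ℕ) :
    zGen m a ω j * zGen m a ω i ^ n = (ω i j ^ n) • (zGen m a ω i ^ n * zGen m a ω j) := by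
  induction n with
  | zero => simp
  | succ n ih =>
    rw [pow_succ, ← mul_assoc, ih, smul_mul_assoc, mul_assoc, z_comm ω hij, pow_succ]
    rw [mul_smul_comm, smul_smul, mul_assoc]

lemma z_pow_mod (ha : 0 < a) (j : Fin m) (n : ℕ) :
    zGen m a ω j ^ n = zGen m a ω j ^ (n % a) := by
  conv_lhs => rw [← Nat.div_add_mod n a]
  rw [pow_add, pow_mul, z_pow_a, one_pow, one_mul]

/-- ordered monomial over a list of indices -/
noncomputable def Qm (l : List (Fin m)) (r : Fin m → Fin a) : RingQuot (TwistRel m a ω) :=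
  (l.map (fun k => zGen m a ω k ^ (r k : ℕ))).prod

lemma Qm_congr {l : List (Fin m)} {r r' : Fin m → Fin a} (h : ∀ k ∈ l, r k = r' k) :
    Qm ω l r = Qm ω l r' := by
  unfold Qm
  congr 1
  exact List.map_congr_left fun k hk => by rw [h k hk]

lemma Qm_cons (k : Fin m) (t : List (Fin m)) (r : Fin m → Fin a) :
    Qm ω (k :: t) r = zGen m a ω k ^ (r k : ℕ) * Qm ω t r := by
  simp [Qm]

lemma key_mem_span (ha : 0 < a) (l : List (Fin m)) (hl : l.Pairwise (· < ·))
    (j : Fin m) (hj : j ∈ l) (r : Fin m → Fin a) :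
    zGen m a ω j * Qm ω l r ∈ Submodule.span ℂ (Set.range (Qm ω l)) := by
  induction l with
  | nil => simp at hj
  | cons k t ih =>
    have hkt : ∀ p ∈ t, k < p := fun p hp => (List.pairwise_cons.mp hl).1 p hp
    have hknt : k ∉ t := fun hk => lt_irrefl k (hkt k hk)
    rcases List.mem_cons.mp hj with hjk | hjt
    · subst hjk
      rw [Qm_cons, ← mul_assoc, ← pow_succ']
      rw [z_pow_mod ω ha]
      set r' : Fin m → Fin a := Function.update r j ⟨(((r j : ℕ)) + 1) % a, Nat.mod_lt _ ha⟩ with hr'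
      have h1 : Qm ω t r = Qm ω t r' := Qm_congr ω fun p hp => by
        rw [hr', Function.update_of_ne (by rintro rfl; exact hknt hp)]
      have h2 : ((r j : ℕ) + 1) % a = (r' j : ℕ) := by simp [hr']
      rw [h1, h2, ← Qm_cons]
      exact Submodule.subset_span ⟨r', rfl⟩
    · rw [Qm_cons, ← mul_assoc, z_comm_pow ω (hkt j hjt), smul_mul_assoc, mul_assoc]
      refine Submodule.smul_mem _ _ ?_
      have hmem := ih (List.pairwise_cons.mp hl).2 hjt
      -- multiply span by zGen k ^ (r k)
      have hmap : ∀ x ∈ Submodule.span ℂ (Set.range (Qm ω t)),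
          zGen m a ω k ^ (r k : ℕ) * x ∈ Submodule.span ℂ (Set.range (Qm ω (k :: t))) := by
        intro x hx
        induction hx using Submodule.span_induction with
        | mem x hx =>
          obtain ⟨s, rfl⟩ := hx
          set s' : Fin m → Fin a := Function.update s k (r k) with hs'
          have h1 : Qm ω t s = Qm ω t s' := Qm_congr ω fun p hp => by
            rw [hs', Function.update_of_ne (by rintro rfl; exact hknt hp)]
          have h2 : (r k : ℕ) = (s' k : ℕ) := by simp [hs']
          rw [h1, h2, ← Qm_cons]
          exact Submodule.subset_span ⟨s', rfl⟩
        | zero => simp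
        | add x y _ _ hx hy => rw [mul_add]; exact Submodule.add_mem _ hx hy
        | smul c x _ hx => rw [mul_smul_comm]; exact Submodule.smul_mem _ _ hx
      exact hmap _ hmem

lemma span_top (ha : 0 < a) :
    Submodule.span ℂ (Set.range (Qm (a := a) ω (List.finRange m))) = ⊤ := by
  set M := Submodule.span ℂ (Set.range (Qm (a := a) ω (List.finRange m))) with hM
  have hone : (1 : RingQuot (TwistRel m a ω)) ∈ M := by
    have : Qm (a := a) ω (List.finRange m) (fun _ => ⟨0, ha⟩) = 1 := by
      unfold Qm
      rw [List.prod_eq_one]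
      intro x hx
      simp only [List.mem_map] at hx
      obtain ⟨k, -, rfl⟩ := hx
      simp
    rw [← this]
    exact Submodule.subset_span ⟨_, rfl⟩
  have hz : ∀ j : Fin m, ∀ x ∈ M, zGen m a ω j * x ∈ M := by
    intro j x hx
    induction hx using Submodule.span_induction with
    | mem x hx =>
      obtain ⟨s, rfl⟩ := hx
      exact key_mem_span ω ha _ (List.pairwise_lt_finRange m) j (List.mem_finRange j) s
    | zero => simp
    | add x y _ _ hx hy => rw [mul_add]; exact Submodule.add_mem _ hx hy
    | smul c x _ hx => rw [mul_smul_comm]; exact Submodule.smul_mem _ _ hx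
  -- the set of elements whose left multiplication preserves M is a subalgebra
  let S : Subalgebra ℂ (RingQuot (TwistRel m a ω)) :=
  { carrier := {y | ∀ x ∈ M, y * x ∈ M}
    mul_mem' := fun {p q} hp hq x hx => by
      rw [mul_assoc]; exact hp _ (hq x hx)
    add_mem' := fun {p q} hp hq x hx => by
      rw [add_mul]; exact Submodule.add_mem _ (hp x hx) (hq x hx)
    algebraMap_mem' := fun c x hx => by
      rw [Algebra.algebraMap_eq_smul_one, smul_mul_assoc, one_mul]
      exact Submodule.smul_mem _ _ hx }
  have hrange : Set.range (zGen m a ω) ⊆ S := by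
    rintro _ ⟨j, rfl⟩
    exact hz j
  have hadj : Algebra.adjoin ℂ (Set.range (zGen m a ω)) = ⊤ := by
    have h1 : Set.range (zGen m a ω) =
        ⇑(RingQuot.mkAlgHom ℂ (TwistRel m a ω)) '' Set.range (FreeAlgebra.ι ℂ) := by
      rw [← Set.range_comp]; rfl
    rw [h1, ← AlgHom.map_adjoin, FreeAlgebra.adjoin_range_ι, Algebra.map_top,
      (AlgHom.range_eq_top _).mpr (RingQuot.mkAlgHom_surjective ℂ _)]
  have hS : S = ⊤ := top_le_iff.mp (hadj ▸ Algebra.adjoin_le hrange)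
  rw [eq_top_iff]
  intro y _
  have hy : y ∈ S := hS ▸ Algebra.mem_top
  simpa using hy 1 hone

section Operators

variable [NeZero a]

lemma pow_mod_eq {u : ℂ} (hu : u ^ a = 1) (n : ℕ) : u ^ (n % a) = u ^ n := by
  conv_rhs => rw [← Nat.div_add_mod n a]
  rw [pow_add, pow_mul, hu, one_pow, one_mul]

lemma pow_val_add {u : ℂ} (hu : u ^ a = 1) (x y : ZMod a) :
    u ^ (x + y).val = u ^ x.val * u ^ y.val := by
  rw [ZMod.val_add, pow_mod_eq hu, pow_add]

/-- coefficient of the twisted shift operator -/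
noncomputable def coefA (j : Fin m) (r : Fin m → ZMod a) : ℂ :=
  ∏ k ∈ Finset.univ.filter (fun k => k < j), ω k j ^ (r k).val

lemma coefA_sub_single {j i : Fin m} (h : j ≤ i) (r : Fin m → ZMod a) (c : ZMod a) :
    coefA ω j (r - Pi.single i c) = coefA ω j r := by
  refine Finset.prod_congr rfl fun k hk => ?_
  have hki : k ≠ i := by
    have := (Finset.mem_filter.mp hk).2
    exact fun he => absurd (he ▸ this) (not_lt.mpr h)
  simp [Pi.single_eq_of_ne hki]

/-- the twisted shift operator representing `z_j` -/
noncomputable def Tmap (j : Fin m) :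
    ((Fin m → ZMod a) → ℂ) →ₗ[ℂ] ((Fin m → ZMod a) → ℂ) where
  toFun f r := coefA ω j r * f (r - Pi.single j 1)
  map_add' f g := by funext r; simp [mul_add]
  map_smul' c f := by funext r; simp [smul_eq_mul]; ring

lemma Tmap_apply (j : Fin m) (f : (Fin m → ZMod a) → ℂ) (r : Fin m → ZMod a) :
    Tmap ω j f r = coefA ω j r * f (r - Pi.single j 1) := rfl

lemma Tmap_pow_apply (j : Fin m) (n : ℕ) (f : (Fin m → ZMod a) → ℂ) (r : Fin m → ZMod a) :
    ((Tmap ω j ^ n) f) r = (coefA ω j r) ^ n * f (r - Pi.single j (n : ZMod a)) := by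
  induction n generalizing f r with
  | zero => simp [Module.End.one_apply]
  | succ n ih =>
    rw [pow_succ, Module.End.mul_apply, ih, Tmap_apply, coefA_sub_single ω (le_refl j)]
    have harg : r - Pi.single j (n : ZMod a) - Pi.single j 1
        = r - Pi.single j ((n + 1 : ℕ) : ZMod a) := by
      rw [sub_sub, ← Pi.single_add]
      push_cast
      rfl
    rw [harg, ← mul_assoc, ← pow_succ]

lemma Tmap_pow_a (hroot : ∀ i j, ω i j ^ a = 1) (j : Fin m) : Tmap (a := a) ω j ^ a = 1 := by
  refine LinearMap.ext fun f => funext fun r => ?_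
  rw [Tmap_pow_apply]
  have h1 : (coefA ω j r) ^ a = 1 := by
    rw [coefA, ← Finset.prod_pow]
    refine Finset.prod_eq_one fun k _ => ?_
    rw [← pow_mul, mul_comm, pow_mul, hroot, one_pow]
  rw [h1, one_mul, ZMod.natCast_self, Pi.single_zero, sub_zero, Module.End.one_apply]

lemma Tmap_comm (ha2 : 2 ≤ a) (hroot : ∀ i j, ω i j ^ a = 1) {i j : Fin m} (hij : i < j) :
    Tmap (a := a) ω j * Tmap (a := a) ω i = ω i j • (Tmap (a := a) ω i * Tmap (a := a) ω j) := by
  haveI : Fact (1 < a) := ⟨ha2⟩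
  refine LinearMap.ext fun f => funext fun r => ?_
  rw [Module.End.mul_apply]
  simp only [LinearMap.smul_apply, Module.End.mul_apply, Pi.smul_apply, smul_eq_mul]
  rw [Tmap_apply, Tmap_apply, Tmap_apply, Tmap_apply]
  have hkey : ω i j * coefA ω j (r - Pi.single i 1) = coefA ω j r := by
    have hi : i ∈ Finset.univ.filter (fun k => k < j) := by simp [hij]
    rw [coefA, coefA, ← Finset.prod_erase_mul _ _ hi, ← Finset.prod_erase_mul _ _ hi]
    have h1 : ∀ k ∈ (Finset.univ.filter (fun k => k < j)).erase i,
        ω k j ^ (((r - Pi.single i 1 : Fin m → ZMod a)) k).val = ω k j ^ (r k).val := by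
      intro k hk
      have : k ≠ i := (Finset.mem_erase.mp hk).1
      simp [Pi.single_eq_of_ne this]
    rw [Finset.prod_congr rfl h1]
    rw [mul_comm (ω i j), mul_assoc]
    congr 1
    have : (r - Pi.single i 1 : Fin m → ZMod a) i = r i - 1 := by simp
    rw [this]
    have := pow_val_add (a := a) (hroot i j) (r i - 1) 1
    rw [sub_add_cancel] at this
    rw [this, ZMod.val_one]
    ring
  rw [coefA_sub_single ω (le_of_lt hij) r 1]
  rw [← hkey]
  have hord : r - Pi.single j 1 - Pi.single i 1 = r - Pi.single i 1 - Pi.single j 1 := by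
    rw [sub_sub, sub_sub, add_comm]
  rw [hord]
  ring

lemma Tmap_pow_single (ha2 : 2 ≤ a) (j : Fin m) (n : ℕ) (s : Fin m → ZMod a)
    (hs : ∀ k, k < j → s k = 0) :
    (Tmap ω j ^ n) (Pi.single s (1 : ℂ)) = Pi.single (s + Pi.single j (n : ZMod a)) 1 := by
  funext r
  rw [Tmap_pow_apply]
  by_cases h : r = s + Pi.single j (n : ZMod a)
  · subst h
    have h1 : s + Pi.single j (n : ZMod a) - Pi.single j (n : ZMod a) = s := by ring
    rw [h1]
    have h2 : coefA ω j (s + Pi.single j (n : ZMod a)) = 1 := by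
      rw [coefA]
      refine Finset.prod_eq_one fun k hk => ?_
      have hkj : k < j := (Finset.mem_filter.mp hk).2
      have : (s + Pi.single j (n : ZMod a) : Fin m → ZMod a) k = 0 := by
        rw [Pi.add_apply, Pi.single_eq_of_ne (ne_of_lt hkj), hs k hkj, add_zero]
      rw [this, ZMod.val_zero, pow_zero]
    rw [h2, one_pow, one_mul, Pi.single_eq_same, Pi.single_eq_same]
  · have h1 : r - Pi.single j (n : ZMod a) ≠ s := fun he => h (by rw [← he]; ring)
    rw [Pi.single_eq_of_ne h1, Pi.single_eq_of_ne h, mul_zero]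

lemma eval_Qm (ha2 : 2 ≤ a)
    (ψ : RingQuot (TwistRel m a ω) →ₐ[ℂ] Module.End ℂ ((Fin m → ZMod a) → ℂ))
    (hψ : ∀ j, ψ (zGen m a ω j) = Tmap ω j)
    (l : List (Fin m)) (hl : l.Pairwise (· < ·)) (r : Fin m → Fin a) :
    ψ (Qm ω l r) (Pi.single 0 1)
      = Pi.single (fun k => if k ∈ l then ((r k : ℕ) : ZMod a) else 0) 1 := by
  induction l with
  | nil =>
    rw [show Qm ω [] r = 1 from rfl, map_one, Module.End.one_apply]
    have h0 : (fun k : Fin m => if k ∈ ([] : List (Fin m)) then ((r k : ℕ) : ZMod a) else 0)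
        = (0 : Fin m → ZMod a) := by
      funext k
      simp
    rw [h0]
  | cons k t ih =>
    have hkt : ∀ p ∈ t, k < p := fun p hp => (List.pairwise_cons.mp hl).1 p hp
    rw [Qm_cons, map_mul, map_pow, hψ, Module.End.mul_apply,
      ih (List.pairwise_cons.mp hl).2]
    set s : Fin m → ZMod a := fun p => if p ∈ t then ((r p : ℕ) : ZMod a) else 0 with hsdef
    have hs : ∀ p, p < k → s p = 0 := by
      intro p hp
      rw [hsdef]
      simp only
      rw [if_neg]
      intro hmem
      exact absurd (hkt p hmem) (not_lt.mpr (le_of_lt hp))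
    rw [Tmap_pow_single ω ha2 k _ s hs]
    have harg : s + Pi.single k ((r k : ℕ) : ZMod a)
        = fun p => if p ∈ k :: t then ((r p : ℕ) : ZMod a) else 0 := by
      funext p
      by_cases hpk : p = k
      · subst hpk
        have h1 : s p = 0 := by
          rw [hsdef]
          simp only
          rw [if_neg (fun hm => lt_irrefl p (hkt p hm))]
        rw [Pi.add_apply, h1, zero_add, Pi.single_eq_same, if_pos (List.mem_cons_self (a := p) (l := t))]
      · rw [Pi.add_apply, Pi.single_eq_of_ne hpk, add_zero, hsdef]
        simp [List.mem_cons, hpk]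
    rw [harg]

end Operators

theorem main_result (m a : ℕ) (hm : 1 ≤ m) (ha : 2 ≤ a)
    (ω : Fin m → Fin m → ℂ) (hne : ∀ i j, ω i j ≠ 0)
    (hdiag : ∀ i, ω i i = 1)
    (hinv : ∀ i j : Fin m, i < j → ω j i = (ω i j)⁻¹)
    (hroot : ∀ i j, ω i j ^ a = 1) :
    (∃ B : Module.Basis (Fin m → Fin a) ℂ (RingQuot (TwistRel m a ω)),
      ∀ r : Fin m → Fin a,
        B r = ((List.finRange m).map (fun j => zGen m a ω j ^ (r j : ℕ))).prod)
    ∧ Module.finrank ℂ (RingQuot (TwistRel m a ω)) = a ^ m := by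
  haveI : NeZero a := ⟨by omega⟩
  set Φ : FreeAlgebra ℂ (Fin m) →ₐ[ℂ] Module.End ℂ ((Fin m → ZMod a) → ℂ) :=
    FreeAlgebra.lift ℂ (fun j => Tmap (a := a) ω j) with hΦ
  have hrel : ∀ ⦃x y⦄, TwistRel m a ω x y → Φ x = Φ y := by
    intro x y h
    cases h with
    | pow j =>
      rw [map_pow, map_one, hΦ, FreeAlgebra.lift_ι_apply]
      exact Tmap_pow_a ω hroot j
    | comm i j hij =>
      rw [map_mul, map_smul, map_mul, hΦ, FreeAlgebra.lift_ι_apply,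
        FreeAlgebra.lift_ι_apply]
      exact Tmap_comm ω ha hroot hij
  set ψ : RingQuot (TwistRel m a ω) →ₐ[ℂ] Module.End ℂ ((Fin m → ZMod a) → ℂ) :=
    RingQuot.liftAlgHom ℂ ⟨Φ, hrel⟩ with hψdef
  have hψ : ∀ j, ψ (zGen m a ω j) = Tmap ω j := by
    intro j
    rw [hψdef, zGen, RingQuot.liftAlgHom_mkAlgHom_apply, hΦ, FreeAlgebra.lift_ι_apply]
  set F : (Fin m → Fin a) → RingQuot (TwistRel m a ω) := Qm ω (List.finRange m) with hF
  set e : (Fin m → Fin a) → (Fin m → ZMod a) := fun r k => ((r k : ℕ) : ZMod a) with he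
  have heval : ∀ r, ψ (F r) (Pi.single 0 1) = Pi.single (e r) 1 := by
    intro r
    rw [hF, eval_Qm ω ha ψ hψ (List.finRange m) (List.pairwise_lt_finRange m) r]
    have harg : (fun k => if k ∈ List.finRange m then ((r k : ℕ) : ZMod a) else 0) = e r := by
      funext k
      rw [if_pos (List.mem_finRange k), he]
    rw [harg]
  have einj : Function.Injective e := by
    intro r r' h
    funext k
    have h1 := congrFun h k
    rw [he] at h1
    simp only at h1
    have h2 := congrArg ZMod.val h1
    rw [ZMod.val_natCast_of_lt (r k).isLt, ZMod.val_natCast_of_lt (r' k).isLt] at h2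
    exact Fin.ext h2
  have li1 : LinearIndependent ℂ (fun s : Fin m → ZMod a => Pi.single s (1 : ℂ)) := by
    have := (Pi.basisFun ℂ (Fin m → ZMod a)).linearIndependent
    convert this using 1
    funext s
    rw [Pi.basisFun_apply]
  have li2 := li1.comp e einj
  set evL : RingQuot (TwistRel m a ω) →ₗ[ℂ] ((Fin m → ZMod a) → ℂ) :=
    LinearMap.comp
      (LinearMap.applyₗ (R := ℂ) (M := (Fin m → ZMod a) → ℂ) (M₂ := (Fin m → ZMod a) → ℂ)
        (Pi.single 0 1)) ψ.toLinearMap with hevL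
  have li : LinearIndependent ℂ F := by
    apply LinearIndependent.of_comp evL
    have hcomp : ⇑evL ∘ F = fun r => Pi.single (e r) (1 : ℂ) := by
      funext r
      exact heval r
    rw [hcomp]
    exact li2
  have hsp : ⊤ ≤ Submodule.span ℂ (Set.range F) := by
    rw [hF, span_top ω (by omega : 0 < a)]
  let B : Module.Basis (Fin m → Fin a) ℂ (RingQuot (TwistRel m a ω)) := Module.Basis.mk li hsp
  refine ⟨⟨B, fun r => ?_⟩, ?_⟩
  · rw [Module.Basis.mk_apply]
    rfl
  · rw [Module.finrank_eq_card_basis B, Fintype.card_fun, Fintype.card_fin, Fintype.card_fin]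

end TwistAux

/-- The `a^m` ordered monomials `z_1^{r_1} ⋯ z_m^{r_m}`, `r ∈ {0,…,a−1}^m`, form a
`ℂ`-basis of the single-order twisted algebra `A_ω`; in particular, `A_ω` has
dimension `a^m` over `ℂ`. -/
theorem twisted_algebra_basis
    (m a : ℕ) (hm : 1 ≤ m) (ha : 2 ≤ a)
    (ω : Fin m → Fin m → ℂ) (hne : ∀ i j, ω i j ≠ 0)
    (hdiag : ∀ i, ω i i = 1)
    (hinv : ∀ i j : Fin m, i < j → ω j i = (ω i j)⁻¹)
    (hroot : ∀ i j, ω i j ^ a = 1) :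
    (∃ B : Module.Basis (Fin m → Fin a) ℂ (RingQuot (TwistRel m a ω)),
      ∀ r : Fin m → Fin a,
        B r = ((List.finRange m).map (fun j => zGen m a ω j ^ (r j : ℕ))).prod)
    ∧ Module.finrank ℂ (RingQuot (TwistRel m a ω)) = a ^ m := by
  exact TwistAux.main_result m a hm ha ω hne hdiag hinv hroot
end
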